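/- arXiv:2405.15303 — 2 statements merged into one kernel-verified Lean document; each statement's English description precedes it below -/
import Mathlib

section
/- Let 𝕏 × 𝕋 be finite with objective map f : 𝕏 × 𝕋 → ℝ^k, let Z* be the Pareto-optimal set of 𝕏 × 𝕋, and X*_Trj = {x ∈ 𝕏 : ∃ t ∈ 𝕋, (x, t) ∈ Z*}. Then the Pareto-optimal set of X*_Trj × 𝕋 (under f restricted to it) equals Z*. -/
def dominates {k : ℕ} (u v : Fin k → ℝ) : Prop :=
  (∀ i, u i ≤ v i) ∧ ∃ j, u j < v j

def paretoSet {α : Type*} {k : ℕ} (S : Set α) (f : α → Fin k → ℝ) : Set α :=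
  {z ∈ S | ¬ ∃ z' ∈ S, dominates (f z') (f z)}

/-! Dominance is the strict product order on `Fin k → ℝ`, so a point of a finite set that is
not Pareto-optimal lies above a minimal objective value, attained at a Pareto-optimal point.
Hence the Pareto set of `S` is also the Pareto set of every `S'` with
`paretoSet S f ⊆ S' ⊆ S`, and `X*_Trj ×ˢ univ` is such a set. -/

theorem dominates_iff_lt {k : ℕ} {u v : Fin k → ℝ} : dominates u v ↔ u < v := by
  rw [Pi.lt_def]
  exact and_congr_right fun _ => exists_congr fun _ => Iff.rfl

section Pareto

variable {α : Type*} {k : ℕ} {S S' : Set α} {f : α → Fin k → ℝ}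

theorem exists_mem_paretoSet_dominates (hS : S.Finite) {z : α} (hz : z ∈ S)
    (hnot : z ∉ paretoSet S f) : ∃ m ∈ paretoSet S f, dominates (f m) (f z) := by
  obtain ⟨z', hz'S, hz'z⟩ : ∃ z' ∈ S, dominates (f z') (f z) := by
    by_contra h
    exact hnot ⟨hz, h⟩
  obtain ⟨b, hbz', hbmin⟩ := (hS.image f).exists_le_minimal (Set.mem_image_of_mem f hz'S)
  obtain ⟨m, hmS, rfl⟩ := hbmin.prop
  refine ⟨m, ⟨hmS, ?_⟩, dominates_iff_lt.mpr (hbz'.trans_lt (dominates_iff_lt.mp hz'z))⟩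
  rintro ⟨w, hwS, hwm⟩
  exact hbmin.not_lt (Set.mem_image_of_mem f hwS) (dominates_iff_lt.mp hwm)

theorem paretoSet_eq_of_paretoSet_subset_of_subset (hS : S.Finite)
    (hpareto : paretoSet S f ⊆ S') (hS' : S' ⊆ S) : paretoSet S' f = paretoSet S f := by
  ext z
  constructor
  · rintro ⟨hzS', hnd⟩
    by_contra hz
    obtain ⟨m, hm, hmz⟩ := exists_mem_paretoSet_dominates hS (hS' hzS') hz
    exact hnd ⟨m, hpareto hm, hmz⟩
  · intro hz
    exact ⟨hpareto hz, fun ⟨z', hz'S', hz'z⟩ => hz.2 ⟨z', hS' hz'S', hz'z⟩⟩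

end Pareto

theorem paretoSet_trjSet_prod_eq {X T : Type*} [Finite X] [Finite T] {k : ℕ}
    (f : X × T → Fin k → ℝ) :
    paretoSet
      ({x : X | ∃ t : T, (x, t) ∈ paretoSet Set.univ f} ×ˢ (Set.univ : Set T)) f
      = paretoSet Set.univ f :=
  paretoSet_eq_of_paretoSet_subset_of_subset Set.finite_univ
    (fun z hz => ⟨⟨z.2, hz⟩, Set.mem_univ _⟩) (Set.subset_univ _)
end

section
/- If y ≤ r componentwise and y strictly dominates r in every coordinate (y_i < r_i for all i), and no point of F weakly dominates y, then HVI(y | F, r) > 0 whenever F is finite. -/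
/-!
The region dominated by the finitely many points of `F` below `r` is a finite union of boxes,
hence compact, and it misses `y` because no point of `F` weakly dominates `y`. Its complement is
therefore a neighbourhood of `y`, and since `y` lies in the closure of the open box
`∏ i, (y i, r i)`, that neighbourhood meets the box in a nonempty open set. This open set lies in
`[y, r]` but outside the old region, so adding `y` increases the volume by a positive amount.
-/

noncomputable def HV {k : ℕ} (F : Set (Fin k → ℝ)) (r : Fin k → ℝ) : ℝ :=
  (MeasureTheory.volume (⋃ y ∈ {y ∈ F | y ≤ r}, Set.Icc y r)).toReal

open MeasureTheory Set

section DominatedRegion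

variable {ι : Type*}

def dominatedRegion (F : Set (ι → ℝ)) (r : ι → ℝ) : Set (ι → ℝ) :=
  ⋃ y ∈ {y ∈ F | y ≤ r}, Icc y r

theorem isCompact_dominatedRegion {F : Set (ι → ℝ)} (hF : F.Finite) (r : ι → ℝ) :
    IsCompact (dominatedRegion F r) :=
  (hF.subset (sep_subset _ _)).isCompact_biUnion fun _ _ => isCompact_Icc

theorem dominatedRegion_union_singleton (F : Set (ι → ℝ)) {y r : ι → ℝ} (hyr : y ≤ r) :
    dominatedRegion (F ∪ {y}) r = dominatedRegion F r ∪ Icc y r := by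
  have hsep : {x ∈ F ∪ {y} | x ≤ r} = {x ∈ F | x ≤ r} ∪ {y} := by
    ext x
    grind
  rw [dominatedRegion, hsep, biUnion_union, biUnion_singleton, dominatedRegion]

theorem notMem_dominatedRegion {F : Set (ι → ℝ)} {y : ι → ℝ}
    (hy : ¬ ∃ y' ∈ F, y' ≤ y) (r : ι → ℝ) : y ∉ dominatedRegion F r := by
  simp only [dominatedRegion, mem_iUnion₂, mem_sep_iff]
  rintro ⟨y', ⟨hy'F, -⟩, hy'y, -⟩
  exact hy ⟨y', hy'F, hy'y⟩

end DominatedRegion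

theorem HV_eq_toReal_volume_dominatedRegion {k : ℕ} (F : Set (Fin k → ℝ)) (r : Fin k → ℝ) :
    HV F r = (volume (dominatedRegion F r)).toReal :=
  rfl

section VolumeGain

variable {ι : Type*} [Fintype ι]

theorem volume_Icc_diff_pos {K : Set (ι → ℝ)} {y r : ι → ℝ} (hK : IsClosed K)
    (hyK : y ∉ K) (hyr : ∀ i, y i < r i) : 0 < volume (Icc y r \ K) := by
  set box : Set (ι → ℝ) := univ.pi fun i => Ioo (y i) (r i)
  have hy_closure : y ∈ closure box := by
    rw [closure_pi_set]
    intro i _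
    show y i ∈ closure (Ioo (y i) (r i))
    rw [closure_Ioo (hyr i).ne]
    exact ⟨le_rfl, (hyr i).le⟩
  have hmeets : (Kᶜ ∩ box).Nonempty :=
    mem_closure_iff_nhds.mp hy_closure _ (hK.isOpen_compl.mem_nhds hyK)
  have hopen : IsOpen (Kᶜ ∩ box) :=
    hK.isOpen_compl.inter (isOpen_set_pi finite_univ fun _ _ => isOpen_Ioo)
  refine (hopen.measure_pos volume hmeets).trans_le (measure_mono ?_)
  rintro x ⟨hxK, hx⟩
  exact ⟨⟨fun i => (hx i trivial).1.le, fun i => (hx i trivial).2.le⟩, hxK⟩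

theorem volume_lt_volume_union_Icc {K : Set (ι → ℝ)} {y r : ι → ℝ} (hK : IsClosed K)
    (hK_fin : volume K ≠ ⊤) (hyK : y ∉ K) (hyr : ∀ i, y i < r i) :
    volume K < volume (K ∪ Icc y r) := by
  rw [← union_sdiff_self,
    measure_union disjoint_sdiff_right (measurableSet_Icc.diff hK.measurableSet)]
  exact ENNReal.lt_add_right hK_fin (volume_Icc_diff_pos hK hyK hyr).ne'

end VolumeGain

theorem HVI_pos {k : ℕ} (F : Set (Fin k → ℝ)) (hF : F.Finite)
    (y r : Fin k → ℝ) (hyr : ∀ i, y i < r i)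
    (hnd : ¬ ∃ y' ∈ F, y' ≤ y) :
    0 < HV (F ∪ {y}) r - HV F r := by
  have hK := isCompact_dominatedRegion hF r
  have hK_fin := hK.measure_lt_top (μ := volume)
  have hKy_fin :=
    (isCompact_dominatedRegion (hF.union (finite_singleton y)) r).measure_lt_top (μ := volume)
  have hlt : volume (dominatedRegion F r) < volume (dominatedRegion (F ∪ {y}) r) := by
    rw [dominatedRegion_union_singleton F fun i => (hyr i).le]
    exact volume_lt_volume_union_Icc hK.isClosed hK_fin.ne (notMem_dominatedRegion hnd r) hyr
  rw [HV_eq_toReal_volume_dominatedRegion, HV_eq_toReal_volume_dominatedRegion, sub_pos]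
  exact (ENNReal.toReal_lt_toReal hK_fin.ne hKy_fin.ne).mpr hlt
end
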